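/- Theorem 5 (upper bound of recovery error for HLISTA-CPSS). Assume μ := μ(A) > 0, let S ⊆ {1, …, N} with 2 ≤ |S| and 2|S| ≤ N, let B_x > 0, x* ∈ X(B_x, S), and b = A x*. Let pⁿ ∈ ℕ for each n, let x⁰ = 0, and for every n: W̄ⁿ, Ŵⁿ ∈ W_s(A); θ₁ⁿ = μ‖xⁿ − x*‖₁, z_vⁿ = xⁿ + (W̄ⁿ)ᵀ(b − Axⁿ), I_vⁿ a set of indices of the pⁿ entries of largest magnitude of z_vⁿ, and vⁿ = S^{I_vⁿ}_{ss,θ₁ⁿ}(z_vⁿ); uⁿ ∈ ℝ^N arbitrary; θ₂ⁿ = μ‖uⁿ − x*‖₁ + μ((N − |S|)/(|S| − 1))·‖uⁿ‖₁, z_wⁿ = uⁿ + (Ŵⁿ)ᵀ(b − Auⁿ), I_wⁿ a set of indices of the pⁿ entries of largest magnitude of z_wⁿ, and wⁿ = S^{I_wⁿ}_{ss,θ₂ⁿ}(z_wⁿ); xⁿ⁺¹ = αⁿvⁿ + (1 − αⁿ)wⁿ with θ₂ⁿ/(θ₁ⁿ + θ₂ⁿ) ≤ αⁿ < 1 if θ₁ⁿ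 ≠ 0 and αⁿ = 1 if θ₁ⁿ = 0. Define Ψ_vⁿ = {i ∈ S : vⁿᵢ ≠ 0, i ∈ I_vⁿ}, Ψ_wⁿ = {i ∈ S : wⁿᵢ ≠ 0, i ∈ I_wⁿ}, and |Ψ_*ⁿ| = min(|Ψ_vⁿ|, |Ψ_wⁿ|). If |S| < (2 + 2·inf_n |Ψ_*ⁿ| + 1/μ)/4, then for every n: supp(xⁿ) ⊆ S and ‖xⁿ − x*‖₂ ≤ |S|·B_x·exp(−Σ_{k=0}^{n−1} c_ss^k), where c_ss^k = −log(4μ|S| − 2μ − 2μ|Ψ_*^k|) > 0; moreover c_ss^k ≥ c := −log(4μ|S| − 2μ) for every k. -/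
import Mathlib


open scoped Classical

/-- The Euclidean (ℓ²) norm on `Fin n → ℝ`. -/
noncomputable def l2norm {n : ℕ} (x : Fin n → ℝ) : ℝ := Real.sqrt (∑ i, (x i) ^ 2)

/-- The ℓ¹ norm on `Fin n → ℝ`. -/
noncomputable def l1norm {n : ℕ} (x : Fin n → ℝ) : ℝ := ∑ i, |x i|

/-- Componentwise soft-thresholding: `S_θ(z)ᵢ = sgn(zᵢ) * max (|zᵢ| - θ) 0`. -/
noncomputable def soft {n : ℕ} (θ : ℝ) (z : Fin n → ℝ) : Fin n → ℝ :=
  fun i => Real.sign (z i) * max (|z i| - θ) 0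

/-- `max_{i ≠ j} |WᵢᵀAⱼ|`, where `Wᵢ`, `Aⱼ` are columns. -/
noncomputable def mutualMax {m n : ℕ} (A W : Matrix (Fin m) (Fin n) ℝ) : ℝ :=
  sSup {c : ℝ | ∃ i j : Fin n, i ≠ j ∧ c = |∑ k, W k i * A k j|}

/-- Generalized mutual coherence `μ(A)`: the infimum of `max_{i≠j} |WᵢᵀAⱼ|` over all
matrices `W` with `WᵢᵀAᵢ = 1` for all `i`. -/
noncomputable def gmc {m n : ℕ} (A : Matrix (Fin m) (Fin n) ℝ) : ℝ :=
  sInf {c : ℝ | ∃ W : Matrix (Fin m) (Fin n) ℝ,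
    (∀ i, (∑ k, W k i * A k i) = 1) ∧ c = mutualMax A W}

/-- `W ∈ W_s(A)`: `WᵢᵀAᵢ = 1` for all `i`, and `W` attains the infimum defining `μ(A)`. -/
def memWs {m n : ℕ} (A W : Matrix (Fin m) (Fin n) ℝ) : Prop :=
  (∀ i, (∑ k, W k i * A k i) = 1) ∧ mutualMax A W = gmc A

/-- Thresholding with support selection `S^I_{ss,θ}`: entries with `|zᵢ| > θ` and `i ∈ I`
pass through unchanged, entries with `|zᵢ| > θ` and `i ∉ I` are soft-thresholded, and
entries with `|zᵢ| ≤ θ` are set to zero. -/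
noncomputable def softSS {n : ℕ} (θ : ℝ) (I : Finset (Fin n)) (z : Fin n → ℝ) :
    Fin n → ℝ :=
  fun i => if θ < |z i| then (if i ∈ I then z i else Real.sign (z i) * (|z i| - θ)) else 0

lemma aux_coh {M N : ℕ} (A W : Matrix (Fin M) (Fin N) ℝ) (hW : memWs A W)
    {i j : Fin N} (hij : i ≠ j) : |∑ k, W k i * A k j| ≤ gmc A := by
  rw [← hW.2]
  apply le_csSup
  · apply Set.Finite.bddAbove
    apply Set.Finite.subset (Set.finite_range
      (fun p : Fin N × Fin N => |∑ k, W k p.1 * A k p.2|))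
    rintro c ⟨i, j, _, rfl⟩
    exact ⟨(i, j), rfl⟩
  · exact ⟨i, j, hij, rfl⟩

lemma aux_z {M N : ℕ} (A W : Matrix (Fin M) (Fin N) ℝ)
    (hW1 : ∀ i, (∑ k, W k i * A k i) = 1) (x d : Fin N → ℝ) (i : Fin N) :
    (x + W.transpose.mulVec (A.mulVec d)) i
      = x i + d i + ∑ j ∈ Finset.univ.erase i, (∑ k, W k i * A k j) * d j := by
  have h1 : (W.transpose.mulVec (A.mulVec d)) i
      = ∑ j, (∑ k, W k i * A k j) * d j := by
    simp only [Matrix.mulVec, dotProduct, Matrix.transpose_apply]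
    simp only [Finset.mul_sum]
    rw [Finset.sum_comm]
    refine Finset.sum_congr rfl fun j _ => ?_
    rw [Finset.sum_mul]
    exact Finset.sum_congr rfl fun k _ => by ring
  have h2 : ∑ j, (∑ k, W k i * A k j) * d j
      = d i + ∑ j ∈ Finset.univ.erase i, (∑ k, W k i * A k j) * d j := by
    rw [← Finset.add_sum_erase _ _ (Finset.mem_univ i), hW1 i, one_mul]
  simp only [Pi.add_apply, h1, h2]
  ring

lemma aux_zbound {M N : ℕ} (A W : Matrix (Fin M) (Fin N) ℝ) (hW : memWs A W)
    (xstar y : Fin N → ℝ) (i : Fin N) :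
    |(y + W.transpose.mulVec (A.mulVec (xstar - y))) i - xstar i|
      ≤ gmc A * ∑ j ∈ Finset.univ.erase i, |xstar j - y j| := by
  rw [aux_z A W hW.1 y (xstar - y) i]
  have h : y i + (xstar - y) i + (∑ j ∈ Finset.univ.erase i,
      (∑ k, W k i * A k j) * (xstar - y) j) - xstar i
      = ∑ j ∈ Finset.univ.erase i, (∑ k, W k i * A k j) * (xstar j - y j) := by
    simp only [Pi.sub_apply]; ring
  rw [h]
  calc |∑ j ∈ Finset.univ.erase i, (∑ k, W k i * A k j) * (xstar j - y j)|
      ≤ ∑ j ∈ Finset.univ.erase i, |(∑ k, W k i * A k j) * (xstar j - y j)| :=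
        Finset.abs_sum_le_sum_abs _ _
    _ ≤ ∑ j ∈ Finset.univ.erase i, gmc A * |xstar j - y j| := by
        refine Finset.sum_le_sum fun j hj => ?_
        rw [abs_mul]
        exact mul_le_mul_of_nonneg_right
          (aux_coh A W hW (Finset.ne_of_mem_erase hj).symm) (abs_nonneg _)
    _ = gmc A * ∑ j ∈ Finset.univ.erase i, |xstar j - y j| := by
        rw [Finset.mul_sum]

lemma aux_soft_zero {n : ℕ} (θ : ℝ) (I : Finset (Fin n)) (z : Fin n → ℝ)
    (i : Fin n) (h : |z i| ≤ θ) : softSS θ I z i = 0 := by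
  simp [softSS, not_lt.2 h]

lemma aux_soft_pass {n : ℕ} (θ : ℝ) (I : Finset (Fin n)) (z : Fin n → ℝ)
    (i : Fin n) (h : θ < |z i|) (hI : i ∈ I) : softSS θ I z i = z i := by
  simp [softSS, h, hI]

lemma aux_sign_abs (t : ℝ) : |Real.sign t| ≤ 1 := by
  rcases lt_trichotomy t 0 with h | h | h
  · rw [Real.sign_of_neg h]; norm_num
  · rw [h, Real.sign_zero]; norm_num
  · rw [Real.sign_of_pos h]; norm_num

lemma aux_soft_le {n : ℕ} (θ : ℝ) (hθ : 0 ≤ θ) (I : Finset (Fin n)) (z : Fin n → ℝ)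
    (t : ℝ) (i : Fin n) : |softSS θ I z i - t| ≤ |z i - t| + θ := by
  unfold softSS
  by_cases h : θ < |z i|
  · by_cases hI : i ∈ I
    · simp only [h, if_true, hI]
      have : 0 ≤ θ := hθ
      linarith [abs_nonneg (z i - t)]
    · simp only [h, if_true, hI, if_false]
      have hza : Real.sign (z i) * |z i| = z i := by
        rcases lt_trichotomy (z i) 0 with hc | hc | hc
        · rw [Real.sign_of_neg hc, abs_of_neg hc]; ring
        · simp [hc]
        · rw [Real.sign_of_pos hc, abs_of_pos hc]; ring
      have hz : Real.sign (z i) * (|z i| - θ) = z i - Real.sign (z i) * θ := by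
        rw [mul_sub, hza]
      rw [hz]
      calc |z i - Real.sign (z i) * θ - t| ≤ |z i - t| + |Real.sign (z i) * θ| := by
            have : z i - Real.sign (z i) * θ - t = (z i - t) + -(Real.sign (z i) * θ) := by ring
            rw [this]
            exact (abs_add_le _ _).trans (by rw [abs_neg])
        _ ≤ |z i - t| + θ := by
            rw [abs_mul, abs_of_nonneg hθ]
            have := aux_sign_abs (z i)
            nlinarith [abs_nonneg (Real.sign (z i))]
  · simp only [h, if_false]
    have : |(0:ℝ) - t| = |t - z i + z i| := by rw [zero_sub, abs_neg]; ring_nf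
    rw [this]
    calc |t - z i + z i| ≤ |t - z i| + |z i| := abs_add_le _ _
      _ ≤ |z i - t| + θ := by rw [abs_sub_comm]; linarith [not_lt.1 h]

lemma aux_l2_le_l1 {n : ℕ} (x : Fin n → ℝ) : l2norm x ≤ l1norm x := by
  unfold l2norm l1norm
  have h : ∑ i, (x i) ^ 2 ≤ (∑ i, |x i|) ^ 2 := by
    calc ∑ i, (x i) ^ 2 = ∑ i, |x i| ^ 2 := by simp [sq_abs]
      _ ≤ (∑ i, |x i|) ^ 2 :=
        Finset.sum_sq_le_sq_sum_of_nonneg fun i _ => abs_nonneg _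
  calc Real.sqrt (∑ i, (x i) ^ 2) ≤ Real.sqrt ((∑ i, |x i|) ^ 2) := Real.sqrt_le_sqrt h
    _ = ∑ i, |x i| := Real.sqrt_sq (Finset.sum_nonneg fun i _ => abs_nonneg _)

lemma aux_sum_erase {N : ℕ} (S : Finset (Fin N)) (g : Fin N → ℝ) :
    ∑ i ∈ S, ∑ j ∈ Finset.univ.erase i, g j
      = ((S.card : ℝ) - 1) * ∑ j, g j + ∑ j ∈ Sᶜ, g j := by
  have h : ∀ i ∈ S, ∑ j ∈ Finset.univ.erase i, g j = (∑ j, g j) - g i :=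
    fun i _ => Finset.sum_erase_eq_sub (Finset.mem_univ i)
  rw [Finset.sum_congr rfl h, Finset.sum_sub_distrib, Finset.sum_const, nsmul_eq_mul]
  have h2 : ∑ i ∈ S, g i + ∑ i ∈ Sᶜ, g i = ∑ j, g j := Finset.sum_add_sum_compl S g
  linarith


set_option maxHeartbeats 2000000 in
/-- Theorem 5: upper bound of recovery error for HLISTA-CPSS. -/
theorem hlista_cpss_recovery {M N : ℕ} (hM : 0 < M) (hN : 0 < N)
    (A : Matrix (Fin M) (Fin N) ℝ)
    (hcols : ∀ j, l2norm (fun i => A i j) = 1)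
    (hμ : 0 < gmc A)
    (S : Finset (Fin N)) (hS2 : 2 ≤ S.card) (hSN : 2 * S.card ≤ N)
    (Bx : ℝ) (hBx : 0 < Bx)
    (xstar : Fin N → ℝ) (hsupp : ∀ i, xstar i ≠ 0 ↔ i ∈ S) (hxb : ∀ i, |xstar i| ≤ Bx)
    (b : Fin M → ℝ) (hb : b = A.mulVec xstar)
    (p : ℕ → ℕ)
    (x v u w zv zw : ℕ → Fin N → ℝ)
    (Wbar What : ℕ → Matrix (Fin M) (Fin N) ℝ)
    (Iv Iw : ℕ → Finset (Fin N))
    (θ₁ θ₂ α : ℕ → ℝ)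
    (hx0 : x 0 = 0)
    (hWbar : ∀ n, memWs A (Wbar n)) (hWhat : ∀ n, memWs A (What n))
    (hθ₁ : ∀ n, θ₁ n = gmc A * l1norm (x n - xstar))
    (hzv : ∀ n, zv n = x n + (Wbar n).transpose.mulVec (b - A.mulVec (x n)))
    (hIv : ∀ n, (Iv n).card = p n ∧ ∀ i ∈ Iv n, ∀ j, j ∉ Iv n → |zv n j| ≤ |zv n i|)
    (hv : ∀ n, v n = softSS (θ₁ n) (Iv n) (zv n))
    (hθ₂ : ∀ n, θ₂ n = gmc A * l1norm (u n - xstar)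
      + gmc A * (((N : ℝ) - (S.card : ℝ)) / ((S.card : ℝ) - 1)) * l1norm (u n))
    (hzw : ∀ n, zw n = u n + (What n).transpose.mulVec (b - A.mulVec (u n)))
    (hIw : ∀ n, (Iw n).card = p n ∧ ∀ i ∈ Iw n, ∀ j, j ∉ Iw n → |zw n j| ≤ |zw n i|)
    (hw : ∀ n, w n = softSS (θ₂ n) (Iw n) (zw n))
    (hα : ∀ n, (θ₁ n ≠ 0 → θ₂ n / (θ₁ n + θ₂ n) ≤ α n ∧ α n < 1) ∧ (θ₁ n = 0 → α n = 1))
    (hxs : ∀ n, x (n + 1) = α n • v n + (1 - α n) • w n)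
    (Pv Pw : ℕ → ℕ)
    (hPv : ∀ n, Pv n = (S.filter (fun i => v n i ≠ 0 ∧ i ∈ Iv n)).card)
    (hPw : ∀ n, Pw n = (S.filter (fun i => w n i ≠ 0 ∧ i ∈ Iw n)).card)
    (hSμ : (S.card : ℝ) <
      (2 + 2 * (⨅ n : ℕ, ((min (Pv n) (Pw n) : ℕ) : ℝ)) + 1 / gmc A) / 4)
    (css : ℕ → ℝ)
    (hcss : ∀ k, css k = -Real.log (4 * gmc A * (S.card : ℝ) - 2 * gmc A
      - 2 * gmc A * ((min (Pv k) (Pw k) : ℕ) : ℝ)))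
    (c : ℝ) (hc : c = -Real.log (4 * gmc A * (S.card : ℝ) - 2 * gmc A)) :
    (∀ k, 0 < css k) ∧ (∀ k, c ≤ css k) ∧
    ∀ n : ℕ, (∀ i, x n i ≠ 0 → i ∈ S) ∧
      l2norm (x n - xstar) ≤
        (S.card : ℝ) * Bx * Real.exp (-(∑ k ∈ Finset.range n, css k)) := by

  -- notation
  have hs2 : (2:ℝ) ≤ (S.card : ℝ) := by exact_mod_cast hS2
  have hNs : 2 * (S.card : ℝ) ≤ (N:ℝ) := by exact_mod_cast hSN
  have hPvle : ∀ n, ((Pv n : ℝ)) ≤ (S.card : ℝ) := by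
    intro n; rw [hPv]; exact_mod_cast Finset.card_filter_le _ _
  have hPwle : ∀ n, ((Pw n : ℝ)) ≤ (S.card : ℝ) := by
    intro n; rw [hPw]; exact_mod_cast Finset.card_filter_le _ _
  have hr_le_Pv : ∀ n, (((min (Pv n) (Pw n) : ℕ)) : ℝ) ≤ (Pv n : ℝ) := by
    intro n; exact_mod_cast min_le_left _ _
  have hr_le_Pw : ∀ n, (((min (Pv n) (Pw n) : ℕ)) : ℝ) ≤ (Pw n : ℝ) := by
    intro n; exact_mod_cast min_le_right _ _
  have hr_le_s : ∀ n, (((min (Pv n) (Pw n) : ℕ)) : ℝ) ≤ (S.card : ℝ) :=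
    fun n => (hr_le_Pv n).trans (hPvle n)
  have hr_nn : ∀ n, (0:ℝ) ≤ (((min (Pv n) (Pw n) : ℕ)) : ℝ) := fun n => Nat.cast_nonneg _
  have htpos : ∀ k, 0 < 4 * gmc A * (S.card : ℝ) - 2 * gmc A
      - 2 * gmc A * (((min (Pv k) (Pw k) : ℕ)) : ℝ) := by
    intro k
    nlinarith [hr_le_s k, hs2, hμ, mul_le_mul_of_nonneg_left (hr_le_s k) hμ.le]
  have hbdd : BddBelow (Set.range fun n : ℕ => (((min (Pv n) (Pw n) : ℕ)) : ℝ)) :=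
    ⟨0, by rintro _ ⟨k, rfl⟩; exact Nat.cast_nonneg _⟩
  have hinf_le : ∀ k, (⨅ n : ℕ, (((min (Pv n) (Pw n) : ℕ)) : ℝ))
      ≤ (((min (Pv k) (Pw k) : ℕ)) : ℝ) := fun k => ciInf_le hbdd k
  have htlt1 : ∀ k, 4 * gmc A * (S.card : ℝ) - 2 * gmc A
      - 2 * gmc A * (((min (Pv k) (Pw k) : ℕ)) : ℝ) < 1 := by
    intro k
    have h4 : (S.card : ℝ) * 4 < 2 + 2 * (⨅ n : ℕ, (((min (Pv n) (Pw n) : ℕ)) : ℝ)) + 1 / gmc A :=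
      (lt_div_iff₀ (by norm_num : (0:ℝ) < 4)).1 hSμ
    have hμinv : gmc A * (1 / gmc A) = 1 := mul_one_div_cancel hμ.ne'
    nlinarith [mul_lt_mul_of_pos_left h4 hμ, hinf_le k,
      mul_le_mul_of_nonneg_left (hinf_le k) hμ.le]
  have hcsspos : ∀ k, 0 < css k := by
    intro k
    rw [hcss k]
    exact neg_pos.2 (Real.log_neg (htpos k) (htlt1 k))
  have hcled : ∀ k, c ≤ css k := by
    intro k
    rw [hc, hcss k]
    refine neg_le_neg (Real.log_le_log (htpos k) ?_)
    nlinarith [hr_nn k, hμ]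
  -- off-support of xstar
  have hxs0 : ∀ i, i ∉ S → xstar i = 0 := by
    intro i hi; by_contra h; exact hi ((hsupp i).1 h)
  -- the one-step estimate
  have hstep : ∀ n, (∀ i, x n i ≠ 0 → i ∈ S) →
      ((∀ i, x (n+1) i ≠ 0 → i ∈ S) ∧
        l1norm (x (n+1) - xstar) ≤ Real.exp (-(css n)) * l1norm (x n - xstar)) := by
    intro n hsup
    have hxn0 : ∀ j, j ∉ S → x n j = 0 := by
      intro j hj; by_contra h; exact hj (hsup j h)
    have he0 : 0 ≤ l1norm (x n - xstar) := Finset.sum_nonneg fun i _ => abs_nonneg _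
    have hu0 : 0 ≤ l1norm (u n - xstar) := Finset.sum_nonneg fun i _ => abs_nonneg _
    have hu1 : 0 ≤ l1norm (u n) := Finset.sum_nonneg fun i _ => abs_nonneg _
    have hθ1nn : 0 ≤ θ₁ n := by rw [hθ₁ n]; exact mul_nonneg hμ.le he0
    have hratio : (0:ℝ) ≤ ((N:ℝ) - (S.card : ℝ)) / ((S.card : ℝ) - 1) :=
      div_nonneg (by linarith) (by linarith)
    have hθ2nn : 0 ≤ θ₂ n := by
      rw [hθ₂ n]
      have := mul_nonneg (mul_nonneg hμ.le hratio) hu1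
      nlinarith [mul_nonneg hμ.le hu0]
    have hμL2 : gmc A * l1norm (u n - xstar) ≤ θ₂ n := by
      rw [hθ₂ n]
      nlinarith [mul_nonneg (mul_nonneg hμ.le hratio) hu1]
    -- z formulas
    have hzv' : zv n = x n + (Wbar n).transpose.mulVec (A.mulVec (xstar - x n)) := by
      rw [hzv n, hb, ← Matrix.mulVec_sub]
    have hzw' : zw n = u n + (What n).transpose.mulVec (A.mulVec (xstar - u n)) := by
      rw [hzw n, hb, ← Matrix.mulVec_sub]
    have hbv : ∀ i, |zv n i - xstar i|
        ≤ gmc A * ∑ j ∈ Finset.univ.erase i, |xstar j - x n j| := by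
      intro i; rw [hzv']; exact aux_zbound A (Wbar n) (hWbar n) xstar (x n) i
    have hbw : ∀ i, |zw n i - xstar i|
        ≤ gmc A * ∑ j ∈ Finset.univ.erase i, |xstar j - u n j| := by
      intro i; rw [hzw']; exact aux_zbound A (What n) (hWhat n) xstar (u n) i
    have hsum_ev : ∑ j, |xstar j - x n j| = l1norm (x n - xstar) := by
      unfold l1norm
      exact Finset.sum_congr rfl fun j _ => by rw [Pi.sub_apply, abs_sub_comm]
    have hsum_eu : ∑ j, |xstar j - u n j| = l1norm (u n - xstar) := by
      unfold l1norm
      exact Finset.sum_congr rfl fun j _ => by rw [Pi.sub_apply, abs_sub_comm]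
    have herase_le_v : ∀ i : Fin N, ∑ j ∈ Finset.univ.erase i, |xstar j - x n j|
        ≤ l1norm (x n - xstar) := by
      intro i
      rw [← hsum_ev]
      exact Finset.sum_le_sum_of_subset_of_nonneg (Finset.subset_univ _)
        fun _ _ _ => abs_nonneg _
    have herase_le_u : ∀ i : Fin N, ∑ j ∈ Finset.univ.erase i, |xstar j - u n j|
        ≤ l1norm (u n - xstar) := by
      intro i
      rw [← hsum_eu]
      exact Finset.sum_le_sum_of_subset_of_nonneg (Finset.subset_univ _)
        fun _ _ _ => abs_nonneg _
    have hvbd : ∀ i, |zv n i - xstar i| ≤ θ₁ n := by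
      intro i
      refine (hbv i).trans ?_
      rw [hθ₁ n]
      exact mul_le_mul_of_nonneg_left (herase_le_v i) hμ.le
    have hwbd : ∀ i, |zw n i - xstar i| ≤ θ₂ n := by
      intro i
      refine (hbw i).trans (le_trans ?_ hμL2)
      exact mul_le_mul_of_nonneg_left (herase_le_u i) hμ.le
    -- zeros off S
    have hv0 : ∀ i, i ∉ S → v n i = 0 := by
      intro i hi
      rw [hv n]
      apply aux_soft_zero
      have := hvbd i
      rwa [hxs0 i hi, sub_zero] at this
    have hw0 : ∀ i, i ∉ S → w n i = 0 := by
      intro i hi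
      rw [hw n]
      apply aux_soft_zero
      have := hwbd i
      rwa [hxs0 i hi, sub_zero] at this
    have hsup' : ∀ i, x (n+1) i ≠ 0 → i ∈ S := by
      intro i h
      by_contra hi
      apply h
      rw [hxs n]
      simp [hv0 i hi, hw0 i hi]
    refine ⟨hsup', ?_⟩
    -- ℓ1 bounds for v and w
    have hVsum : l1norm (v n - xstar) = ∑ i ∈ S, |(v n - xstar) i| := by
      unfold l1norm
      refine (Finset.sum_subset (Finset.subset_univ S) fun i _ hi => ?_).symm
      rw [Pi.sub_apply, hv0 i hi, hxs0 i hi, sub_zero, abs_zero]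
    have hWsum : l1norm (w n - xstar) = ∑ i ∈ S, |(w n - xstar) i| := by
      unfold l1norm
      refine (Finset.sum_subset (Finset.subset_univ S) fun i _ hi => ?_).symm
      rw [Pi.sub_apply, hw0 i hi, hxs0 i hi, sub_zero, abs_zero]
    have hVi : ∀ i ∈ S, |(v n - xstar) i| ≤ |zv n i - xstar i|
        + (if (v n i ≠ 0 ∧ i ∈ Iv n) then 0 else θ₁ n) := by
      intro i _
      rw [Pi.sub_apply]
      by_cases hcase : θ₁ n < |zv n i| ∧ i ∈ Iv n
      · have hvz : v n i = zv n i := by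
          rw [hv n]; exact aux_soft_pass _ _ _ _ hcase.1 hcase.2
        have hne : v n i ≠ 0 := by
          rw [hvz]; intro h0
          rw [h0, abs_zero] at hcase
          exact absurd hcase.1 (not_lt.2 hθ1nn)
        rw [if_pos ⟨hne, hcase.2⟩, hvz, add_zero]
      · have hcond : ¬ (v n i ≠ 0 ∧ i ∈ Iv n) := by
          rintro ⟨hne, hI⟩
          refine hcase ⟨?_, hI⟩
          by_contra hle
          exact hne (by rw [hv n]; exact aux_soft_zero _ _ _ _ (not_lt.1 hle))
        rw [if_neg hcond, hv n]
        exact aux_soft_le _ hθ1nn _ _ _ i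
    have hWi : ∀ i ∈ S, |(w n - xstar) i| ≤ |zw n i - xstar i|
        + (if (w n i ≠ 0 ∧ i ∈ Iw n) then 0 else θ₂ n) := by
      intro i _
      rw [Pi.sub_apply]
      by_cases hcase : θ₂ n < |zw n i| ∧ i ∈ Iw n
      · have hvz : w n i = zw n i := by
          rw [hw n]; exact aux_soft_pass _ _ _ _ hcase.1 hcase.2
        have hne : w n i ≠ 0 := by
          rw [hvz]; intro h0
          rw [h0, abs_zero] at hcase
          exact absurd hcase.1 (not_lt.2 hθ2nn)
        rw [if_pos ⟨hne, hcase.2⟩, hvz, add_zero]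
      · have hcond : ¬ (w n i ≠ 0 ∧ i ∈ Iw n) := by
          rintro ⟨hne, hI⟩
          refine hcase ⟨?_, hI⟩
          by_contra hle
          exact hne (by rw [hw n]; exact aux_soft_zero _ _ _ _ (not_lt.1 hle))
        rw [if_neg hcond, hw n]
        exact aux_soft_le _ hθ2nn _ _ _ i
    have hVcount : ∑ i ∈ S, (if (v n i ≠ 0 ∧ i ∈ Iv n) then (0:ℝ) else θ₁ n)
        = ((S.card : ℝ) - (Pv n : ℝ)) * θ₁ n := by
      rw [Finset.sum_ite, Finset.sum_const, Finset.sum_const]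
      have hc' := Finset.card_filter_add_card_filter_not
        (s := S) (p := fun i => v n i ≠ 0 ∧ i ∈ Iv n)
      have hcast : ((S.filter fun i => ¬(v n i ≠ 0 ∧ i ∈ Iv n)).card : ℝ)
          = (S.card : ℝ) - (Pv n : ℝ) := by
        rw [hPv n]
        have := congrArg (Nat.cast (R := ℝ)) hc'
        push_cast at this ⊢
        linarith
      rw [smul_zero, zero_add, nsmul_eq_mul, hcast]
    have hWcount : ∑ i ∈ S, (if (w n i ≠ 0 ∧ i ∈ Iw n) then (0:ℝ) else θ₂ n)
        = ((S.card : ℝ) - (Pw n : ℝ)) * θ₂ n := by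
      rw [Finset.sum_ite, Finset.sum_const, Finset.sum_const]
      have hc' := Finset.card_filter_add_card_filter_not
        (s := S) (p := fun i => w n i ≠ 0 ∧ i ∈ Iw n)
      have hcast : ((S.filter fun i => ¬(w n i ≠ 0 ∧ i ∈ Iw n)).card : ℝ)
          = (S.card : ℝ) - (Pw n : ℝ) := by
        rw [hPw n]
        have := congrArg (Nat.cast (R := ℝ)) hc'
        push_cast at this ⊢
        linarith
      rw [smul_zero, zero_add, nsmul_eq_mul, hcast]
    have hVz : ∑ i ∈ S, |zv n i - xstar i| ≤ ((S.card : ℝ) - 1) * θ₁ n := by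
      have hc0 : ∑ j ∈ Sᶜ, |xstar j - x n j| = 0 := by
        refine Finset.sum_eq_zero fun j hj => ?_
        have hjS : j ∉ S := Finset.mem_compl.1 hj
        rw [hxs0 j hjS, hxn0 j hjS, sub_zero, abs_zero]
      calc ∑ i ∈ S, |zv n i - xstar i|
          ≤ ∑ i ∈ S, gmc A * ∑ j ∈ Finset.univ.erase i, |xstar j - x n j| :=
            Finset.sum_le_sum fun i _ => hbv i
        _ = gmc A * ∑ i ∈ S, ∑ j ∈ Finset.univ.erase i, |xstar j - x n j| := by
            rw [Finset.mul_sum]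
        _ = ((S.card : ℝ) - 1) * θ₁ n := by
            rw [aux_sum_erase, hc0, hsum_ev, hθ₁ n]; ring
    have hWz : ∑ i ∈ S, |zw n i - xstar i| ≤ ((S.card : ℝ) - 1) * θ₂ n := by
      have hc0 : ∑ j ∈ Sᶜ, |xstar j - u n j| ≤ l1norm (u n) := by
        have h1 : ∀ j ∈ Sᶜ, |xstar j - u n j| = |u n j| := by
          intro j hj
          rw [hxs0 j (Finset.mem_compl.1 hj), zero_sub, abs_neg]
        rw [Finset.sum_congr rfl h1]
        unfold l1norm
        exact Finset.sum_le_sum_of_subset_of_nonneg (Finset.subset_univ _)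
          fun _ _ _ => abs_nonneg _
      have hkey : ((S.card : ℝ) - 1) * (((N:ℝ) - (S.card : ℝ)) / ((S.card : ℝ) - 1))
          = (N:ℝ) - (S.card : ℝ) := by
        have hne : (S.card : ℝ) - 1 ≠ 0 := by linarith
        rw [mul_comm, div_mul_cancel₀ _ hne]
      have hcalc : ∑ i ∈ S, |zw n i - xstar i|
          ≤ gmc A * (((S.card : ℝ) - 1) * l1norm (u n - xstar) + l1norm (u n)) := by
        calc ∑ i ∈ S, |zw n i - xstar i|
            ≤ ∑ i ∈ S, gmc A * ∑ j ∈ Finset.univ.erase i, |xstar j - u n j| :=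
              Finset.sum_le_sum fun i _ => hbw i
          _ = gmc A * ∑ i ∈ S, ∑ j ∈ Finset.univ.erase i, |xstar j - u n j| := by
              rw [Finset.mul_sum]
          _ = gmc A * (((S.card : ℝ) - 1) * (∑ j, |xstar j - u n j|)
                + ∑ j ∈ Sᶜ, |xstar j - u n j|) := by rw [aux_sum_erase]
          _ ≤ gmc A * (((S.card : ℝ) - 1) * l1norm (u n - xstar) + l1norm (u n)) := by
              rw [hsum_eu]
              exact mul_le_mul_of_nonneg_left (by linarith) hμ.le
      refine hcalc.trans ?_
      rw [hθ₂ n]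
      have hexp : ((S.card : ℝ) - 1) * (gmc A * l1norm (u n - xstar)
          + gmc A * (((N:ℝ) - (S.card : ℝ)) / ((S.card : ℝ) - 1)) * l1norm (u n))
          = ((S.card : ℝ) - 1) * (gmc A * l1norm (u n - xstar))
            + gmc A * ((N:ℝ) - (S.card : ℝ)) * l1norm (u n) := by
        linear_combination gmc A * l1norm (u n) * hkey
      rw [hexp]
      have h0 : 0 ≤ gmc A * ((N:ℝ) - (S.card : ℝ) - 1) * l1norm (u n) :=
        mul_nonneg (mul_nonneg hμ.le (by linarith)) hu1
      have hid : ((S.card : ℝ) - 1) * (gmc A * l1norm (u n - xstar))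
            + gmc A * ((N:ℝ) - (S.card : ℝ)) * l1norm (u n)
            - gmc A * (((S.card : ℝ) - 1) * l1norm (u n - xstar) + l1norm (u n))
          = gmc A * ((N:ℝ) - (S.card : ℝ) - 1) * l1norm (u n) := by ring
      linarith [h0, hid]
    have hV : l1norm (v n - xstar) ≤ (2 * (S.card : ℝ) - 1 - (Pv n : ℝ)) * θ₁ n := by
      rw [hVsum]
      calc ∑ i ∈ S, |(v n - xstar) i|
          ≤ ∑ i ∈ S, (|zv n i - xstar i|
              + (if (v n i ≠ 0 ∧ i ∈ Iv n) then 0 else θ₁ n)) :=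
            Finset.sum_le_sum hVi
        _ = (∑ i ∈ S, |zv n i - xstar i|)
              + ∑ i ∈ S, (if (v n i ≠ 0 ∧ i ∈ Iv n) then (0:ℝ) else θ₁ n) :=
            Finset.sum_add_distrib
        _ ≤ ((S.card : ℝ) - 1) * θ₁ n + ((S.card : ℝ) - (Pv n : ℝ)) * θ₁ n := by
            rw [hVcount]; linarith [hVz]
        _ = (2 * (S.card : ℝ) - 1 - (Pv n : ℝ)) * θ₁ n := by ring
    have hWb : l1norm (w n - xstar) ≤ (2 * (S.card : ℝ) - 1 - (Pw n : ℝ)) * θ₂ n := by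
      rw [hWsum]
      calc ∑ i ∈ S, |(w n - xstar) i|
          ≤ ∑ i ∈ S, (|zw n i - xstar i|
              + (if (w n i ≠ 0 ∧ i ∈ Iw n) then 0 else θ₂ n)) :=
            Finset.sum_le_sum hWi
        _ = (∑ i ∈ S, |zw n i - xstar i|)
              + ∑ i ∈ S, (if (w n i ≠ 0 ∧ i ∈ Iw n) then (0:ℝ) else θ₂ n) :=
            Finset.sum_add_distrib
        _ ≤ ((S.card : ℝ) - 1) * θ₂ n + ((S.card : ℝ) - (Pw n : ℝ)) * θ₂ n := by
            rw [hWcount]; linarith [hWz]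
        _ = (2 * (S.card : ℝ) - 1 - (Pw n : ℝ)) * θ₂ n := by ring
    have hK0 : (0:ℝ) ≤ 2 * (S.card : ℝ) - 1 - (((min (Pv n) (Pw n) : ℕ)) : ℝ) := by
      linarith [hr_le_s n]
    have hVK : l1norm (v n - xstar)
        ≤ (2 * (S.card : ℝ) - 1 - (((min (Pv n) (Pw n) : ℕ)) : ℝ)) * θ₁ n :=
      hV.trans (mul_le_mul_of_nonneg_right (by linarith [hr_le_Pv n]) hθ1nn)
    have hWK : l1norm (w n - xstar)
        ≤ (2 * (S.card : ℝ) - 1 - (((min (Pv n) (Pw n) : ℕ)) : ℝ)) * θ₂ n :=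
      hWb.trans (mul_le_mul_of_nonneg_right (by linarith [hr_le_Pw n]) hθ2nn)
    have hexp : Real.exp (-(css n))
        = 2 * gmc A * (2 * (S.card : ℝ) - 1 - (((min (Pv n) (Pw n) : ℕ)) : ℝ)) := by
      rw [hcss n, neg_neg, Real.exp_log (htpos n)]; ring
    by_cases hz1 : θ₁ n = 0
    · have hα1 := (hα n).2 hz1
      have hxeq : x (n+1) - xstar = v n - xstar := by
        rw [hxs n, hα1]
        simp
      calc l1norm (x (n+1) - xstar) = l1norm (v n - xstar) := by rw [hxeq]
        _ ≤ (2 * (S.card : ℝ) - 1 - (Pv n : ℝ)) * θ₁ n := hV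
        _ = 0 := by rw [hz1]; ring
        _ ≤ Real.exp (-(css n)) * l1norm (x n - xstar) :=
            mul_nonneg (Real.exp_nonneg _) he0
    · have hθ1pos : 0 < θ₁ n := lt_of_le_of_ne hθ1nn (Ne.symm hz1)
      obtain ⟨hαlo, hαhi⟩ := (hα n).1 hz1
      have hsumpos : 0 < θ₁ n + θ₂ n := by linarith
      have hα0 : 0 ≤ α n := le_trans (div_nonneg hθ2nn hsumpos.le) hαlo
      have hα1' : α n ≤ 1 := hαhi.le
      have hkey2 : θ₂ n ≤ α n * (θ₁ n + θ₂ n) := (div_le_iff₀ hsumpos).1 hαlo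
      have htri : l1norm (x (n+1) - xstar)
          ≤ α n * l1norm (v n - xstar) + (1 - α n) * l1norm (w n - xstar) := by
        rw [hxs n]
        unfold l1norm
        rw [Finset.mul_sum, Finset.mul_sum, ← Finset.sum_add_distrib]
        refine Finset.sum_le_sum fun i _ => ?_
        have hrewrite : (α n • v n + (1 - α n) • w n - xstar) i
            = α n * (v n i - xstar i) + (1 - α n) * (w n i - xstar i) := by
          simp only [Pi.sub_apply, Pi.add_apply, Pi.smul_apply, smul_eq_mul]
          ring
        rw [hrewrite]
        calc |α n * (v n i - xstar i) + (1 - α n) * (w n i - xstar i)|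
            ≤ |α n * (v n i - xstar i)| + |(1 - α n) * (w n i - xstar i)| := abs_add_le _ _
          _ = α n * |(v n - xstar) i| + (1 - α n) * |(w n - xstar) i| := by
              rw [abs_mul, abs_mul, abs_of_nonneg hα0,
                abs_of_nonneg (by linarith : (0:ℝ) ≤ 1 - α n), Pi.sub_apply, Pi.sub_apply]
      have hlv0 : 0 ≤ l1norm (v n - xstar) := Finset.sum_nonneg fun i _ => abs_nonneg _
      have hlw0 : 0 ≤ l1norm (w n - xstar) := Finset.sum_nonneg fun i _ => abs_nonneg _
      calc l1norm (x (n+1) - xstar)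
          ≤ α n * l1norm (v n - xstar) + (1 - α n) * l1norm (w n - xstar) := htri
        _ ≤ α n * ((2 * (S.card : ℝ) - 1 - (((min (Pv n) (Pw n) : ℕ)) : ℝ)) * θ₁ n)
              + (1 - α n) * ((2 * (S.card : ℝ) - 1 - (((min (Pv n) (Pw n) : ℕ)) : ℝ)) * θ₂ n) :=
            add_le_add (mul_le_mul_of_nonneg_left hVK hα0)
              (mul_le_mul_of_nonneg_left hWK (by linarith))
        _ = (2 * (S.card : ℝ) - 1 - (((min (Pv n) (Pw n) : ℕ)) : ℝ))
              * (α n * θ₁ n + (1 - α n) * θ₂ n) := by ring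
        _ ≤ (2 * (S.card : ℝ) - 1 - (((min (Pv n) (Pw n) : ℕ)) : ℝ)) * (2 * θ₁ n) := by
            refine mul_le_mul_of_nonneg_left ?_ hK0
            nlinarith [hkey2, mul_nonneg (by linarith : (0:ℝ) ≤ 1 - α n) hθ1pos.le]
        _ = Real.exp (-(css n)) * l1norm (x n - xstar) := by
            rw [hexp, hθ₁ n]; ring
  -- base case bound
  have hbase : l1norm (x 0 - xstar) ≤ (S.card : ℝ) * Bx := by
    rw [hx0]
    unfold l1norm
    have h1 : ∀ i : Fin N, |((0:Fin N → ℝ) - xstar) i| = |xstar i| := by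
      intro i; simp
    rw [Finset.sum_congr rfl fun i _ => h1 i]
    rw [← Finset.sum_subset (Finset.subset_univ S)
      (fun i _ hi => by rw [hxs0 i hi, abs_zero])]
    calc ∑ i ∈ S, |xstar i| ≤ ∑ _i ∈ S, Bx := Finset.sum_le_sum fun i _ => hxb i
      _ = (S.card : ℝ) * Bx := by rw [Finset.sum_const, nsmul_eq_mul]
  have hmain : ∀ n, (∀ i, x n i ≠ 0 → i ∈ S) ∧ l1norm (x n - xstar)
      ≤ (S.card : ℝ) * Bx * Real.exp (-(∑ k ∈ Finset.range n, css k)) := by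
    intro n
    induction n with
    | zero =>
      refine ⟨fun i h => ?_, ?_⟩
      · rw [hx0] at h; simp at h
      · simpa using hbase
    | succ n ih =>
      obtain ⟨g1, g2⟩ := hstep n ih.1
      refine ⟨g1, ?_⟩
      calc l1norm (x (n+1) - xstar)
          ≤ Real.exp (-(css n)) * l1norm (x n - xstar) := g2
        _ ≤ Real.exp (-(css n))
              * ((S.card : ℝ) * Bx * Real.exp (-(∑ k ∈ Finset.range n, css k))) :=
            mul_le_mul_of_nonneg_left ih.2 (Real.exp_nonneg _)
        _ = (S.card : ℝ) * Bx * Real.exp (-(∑ k ∈ Finset.range (n+1), css k)) := by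
            rw [Finset.sum_range_succ, neg_add, Real.exp_add]; ring
  exact ⟨hcsspos, hcled, fun n => ⟨(hmain n).1, (aux_l2_le_l1 _).trans (hmain n).2⟩⟩
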